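/- Let z ∈ ℂ with z ∉ Σ := {(πn)² : n∈ℕ}, and let h ∈ ℓ²(X⁰,m⁰). Define F:X¹→ℂ by F(xy,t) = h(x)·Φ(√z,1−t)/Φ(√z,1) + h(y)·Φ(√z,t)/Φ(√z,1). Then F ∈ Ĥ²(X¹,m¹), F satisfies the vertex continuity conditions (so F ∈ dom S), −F''_{xy} = z·F_{xy} on every edge (i.e. SF = zF), and ΓF = h. In other words, F = γ(z)h, where γ(z) is the Krein γ-field of the boundary triple (ℓ²(X⁰,m⁰),Γ,Γ') for S. -/

import Mathlib

open MeasureTheory Set ENNReal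

set_option linter.unusedSectionVars false

noncomputable section

/-- A weighted network: countable connected graph without loops or multiple edges,
equipped with positive conductances `c` satisfying `m⁰(x) = ∑_{y∼x} c(xy) < ∞`. -/
structure Network (V : Type) : Type where
  adj : V → V → Prop
  adj_symm : ∀ x y, adj x y → adj y x
  adj_irrefl : ∀ x, ¬ adj x x
  adj_connected : ∀ x y, Relation.ReflTransGen adj x y
  c : V → V → ℝ
  c_symm : ∀ x y, c x y = c y x
  c_pos : ∀ x y, adj x y → 0 < c x y
  c_eq_zero : ∀ x y, ¬ adj x y → c x y = 0
  c_summable : ∀ x, Summable fun y => c x y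

namespace Network

variable {V : Type} [Countable V] [MeasurableSpace V] [DiscreteMeasurableSpace V]

/-- The vertex weight `m⁰(x) = ∑_{y : y ∼ x} c(xy)`. -/
def m0 (N : Network V) (x : V) : ℝ := ∑' y, N.c x y

/-- The measure `m¹` on the metric graph `X¹`.  A point `((x,y),t)` represents the point
at distance `t ∈ (0,1)` from `x` on the edge `[x,y]`; each edge appears with both
orientations, whence the factor `1/2`. -/
def edgeMeasure (N : Network V) : Measure ((V × V) × ℝ) :=
  Measure.sum fun e : V × V =>
    Measure.map (fun t => (e, t))
      ((ENNReal.ofReal (N.c e.1 e.2 / 2)) • (volume.restrict (Set.Ioo (0:ℝ) 1)))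

/-- The identification `(xy,t) ≡ (yx,1-t)` of the two orientations of an edge. -/
def eFlip : (V × V) × ℝ → (V × V) × ℝ := fun p => ((p.1.2, p.1.1), 1 - p.2)

theorem measurable_eFlip : Measurable (eFlip (V := V)) := by
  apply Measurable.prod
  · exact ((measurable_snd.comp measurable_fst).prodMk (measurable_fst.comp measurable_fst))
  · exact measurable_const.sub measurable_snd

theorem measurePreserving_eFlip (N : Network V) :
    MeasurePreserving (eFlip (V := V)) N.edgeMeasure N.edgeMeasure := by
  refine ⟨measurable_eFlip, ?_⟩
  ext s hs
  rw [Measure.map_apply measurable_eFlip hs, edgeMeasure,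
    Measure.sum_apply _ (measurable_eFlip hs), Measure.sum_apply _ hs]
  have key : ∀ e : V × V,
      (Measure.map (fun t => (e, t))
        ((ENNReal.ofReal (N.c e.1 e.2 / 2)) • (volume.restrict (Set.Ioo (0:ℝ) 1))))
          (eFlip ⁻¹' s)
      = (Measure.map (fun t => ((e.2, e.1), t))
        ((ENNReal.ofReal (N.c e.2 e.1 / 2)) • (volume.restrict (Set.Ioo (0:ℝ) 1)))) s := by
    intro e
    have hme : Measurable fun t : ℝ => (e, t) := measurable_prodMk_left
    have hme' : Measurable fun t : ℝ => ((e.2, e.1), t) := measurable_prodMk_left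
    rw [Measure.map_apply hme (measurable_eFlip hs), Measure.map_apply hme' hs,
      Measure.smul_apply, Measure.smul_apply, N.c_symm e.1 e.2]
    congr 1
    have hpre : ((fun t : ℝ => (e, t)) ⁻¹' (eFlip ⁻¹' s))
        = (fun t : ℝ => 1 - t) ⁻¹' ((fun t : ℝ => ((e.2, e.1), t)) ⁻¹' s) := by
      ext t; simp [eFlip]
    rw [hpre]
    have hmp : MeasurePreserving (fun t : ℝ => 1 - t)
        (volume.restrict (Set.Ioo (0:ℝ) 1)) (volume.restrict (Set.Ioo (0:ℝ) 1)) := by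
      have h0 : MeasurePreserving (fun t : ℝ => 1 - t) volume volume :=
        Measure.measurePreserving_sub_left volume 1
      have h1 := h0.restrict_preimage (s := Set.Ioo (0:ℝ) 1) measurableSet_Ioo
      have h2 : (fun t : ℝ => 1 - t) ⁻¹' (Set.Ioo (0:ℝ) 1) = Set.Ioo (0:ℝ) 1 := by
        ext t; constructor <;> (intro ht; simp only [Set.mem_preimage, Set.mem_Ioo] at *; constructor <;> linarith [ht.1, ht.2])
      rwa [h2] at h1
    exact (hmp.measure_preimage ((hme' hs).nullMeasurableSet)).symm ▸ rfl
  calc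
    (∑' e : V × V,
        (Measure.map (fun t => (e, t))
          ((ENNReal.ofReal (N.c e.1 e.2 / 2)) • (volume.restrict (Set.Ioo (0:ℝ) 1))))
            (eFlip ⁻¹' s))
        = ∑' e : V × V,
          (Measure.map (fun t => ((e.2, e.1), t))
            ((ENNReal.ofReal (N.c e.2 e.1 / 2)) • (volume.restrict (Set.Ioo (0:ℝ) 1)))) s :=
      tsum_congr key
    _ = ∑' e : V × V,
          (Measure.map (fun t => (e, t))
            ((ENNReal.ofReal (N.c e.1 e.2 / 2)) • (volume.restrict (Set.Ioo (0:ℝ) 1)))) s :=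
      (Equiv.prodComm V V).tsum_eq fun e =>
        (Measure.map (fun t => (e, t))
          ((ENNReal.ofReal (N.c e.1 e.2 / 2)) • (volume.restrict (Set.Ioo (0:ℝ) 1)))) s

/-- The continuous linear map `F ↦ F ∘ σ` induced by the edge-orientation flip. -/
def flipOp (N : Network V) : Lp ℂ 2 N.edgeMeasure →L[ℂ] Lp ℂ 2 N.edgeMeasure :=
  (Lp.compMeasurePreservingₗᵢ (E := ℂ) (p := 2) ℂ (eFlip (V := V))
    N.measurePreserving_eFlip).toContinuousLinearMap

/-- The Hilbert space `L²(X¹, m¹)` of square-integrable functions on the metric graph,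
realized as the subspace of `L²` functions on oriented edges which are compatible with
the identification `(xy,t) ≡ (yx, 1-t)`. -/
def L2X (N : Network V) : Submodule ℂ (Lp ℂ 2 N.edgeMeasure) :=
  LinearMap.ker ((N.flipOp - ContinuousLinearMap.id ℂ (Lp ℂ 2 N.edgeMeasure) :
    Lp ℂ 2 N.edgeMeasure →L[ℂ] Lp ℂ 2 N.edgeMeasure) : Lp ℂ 2 N.edgeMeasure →ₗ[ℂ] Lp ℂ 2 N.edgeMeasure)

theorem isClosed_L2X (N : Network V) : IsClosed (N.L2X : Set (Lp ℂ 2 N.edgeMeasure)) :=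
  ContinuousLinearMap.isClosed_ker (N.flipOp - ContinuousLinearMap.id ℂ (Lp ℂ 2 N.edgeMeasure))

instance (N : Network V) : CompleteSpace N.L2X :=
  (isClosed_L2X N).completeSpace_coe

end Network

namespace Network

variable {V : Type} [Countable V] [MeasurableSpace V] [DiscreteMeasurableSpace V]

/-- The value of (a representative of) `F ∈ L²(X¹,m¹)` at the point of the edge `[x,y]`
at distance `t` from `x`. -/
def edgeFun (N : Network V) (F : Lp ℂ 2 N.edgeMeasure) (x y : V) (t : ℝ) : ℂ :=
  F ((x, y), t)

/-- The counting measure on vertices weighted by `m⁰`; `ℓ²(X⁰,m⁰) = Lp ℂ 2 N.vertexMeasure`. -/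
def vertexMeasure (N : Network V) : Measure V :=
  Measure.sum fun x => (ENNReal.ofReal (N.m0 x)) • Measure.dirac x

/-- The averaging operator, at the level of functions. -/
def avgFun (N : Network V) (f : V → V → ℝ → ℂ) (x y : V) (t : ℝ) : ℂ :=
  (N.m0 x : ℂ)⁻¹ * (∑' u, (N.c x u : ℂ) * (∫ s in (0:ℝ)..(1 - t), f x u s))
    + (N.m0 y : ℂ)⁻¹ * (∑' v, (N.c y v : ℂ) * (∫ s in (0:ℝ)..t, f y v s))

/-- `f, g, h` are (continuous versions of) an element of `Ĥ²(X¹,m¹)` together with its first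
and second edgewise derivatives: on each edge, `g` is the derivative of `f` and `h` the
derivative of `g` (in the sense of absolutely continuous functions, via the fundamental
theorem of calculus), and `f`, `g`, `h` are square-integrable on the metric graph. -/
structure IsH2Rep (N : Network V) (f g h : V → V → ℝ → ℂ) : Prop where
  ftc₁ : ∀ x y, N.adj x y → ∀ t ∈ Set.Icc (0:ℝ) 1,
    f x y t = f x y 0 + ∫ s in (0:ℝ)..t, g x y s
  ftc₂ : ∀ x y, N.adj x y → ∀ t ∈ Set.Icc (0:ℝ) 1,
    g x y t = g x y 0 + ∫ s in (0:ℝ)..t, h x y s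
  intervalIntegrable_g : ∀ x y, N.adj x y → IntervalIntegrable (g x y) volume 0 1
  intervalIntegrable_h : ∀ x y, N.adj x y → IntervalIntegrable (h x y) volume 0 1
  memL2_f : MemLp (fun p : (V × V) × ℝ => f p.1.1 p.1.2 p.2) 2 N.edgeMeasure
  memL2_g : MemLp (fun p : (V × V) × ℝ => g p.1.1 p.1.2 p.2) 2 N.edgeMeasure
  memL2_h : MemLp (fun p : (V × V) × ℝ => h p.1.1 p.1.2 p.2) 2 N.edgeMeasure

/-- The graph of the operator `S = -d²/dt²` with domain the functions in `Ĥ²(X¹,m¹)` which are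
continuous at the vertices: `(F, G) ∈ graph S` iff `F` has an edgewise `H²` representative
`f` (with derivatives `g`, `h`), `f` is continuous at each vertex, and `G = -f''`. -/
def SGraph (N : Network V) (F G : N.L2X) : Prop :=
  ∃ f g h : V → V → ℝ → ℂ, N.IsH2Rep f g h ∧
    (⇑(F : Lp ℂ 2 N.edgeMeasure) =ᵐ[N.edgeMeasure] fun p => f p.1.1 p.1.2 p.2) ∧
    (∀ x u v, N.adj x u → N.adj x v → f x u 0 = f x v 0) ∧
    (⇑(G : Lp ℂ 2 N.edgeMeasure) =ᵐ[N.edgeMeasure] fun p => -(h p.1.1 p.1.2 p.2))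

/-- The graph of the (Kirchhoff) Laplacian `L`: the restriction of `S` to the functions
satisfying moreover `F'(x) = ∑_{y∼x} c(xy) F'(xy,0+) = 0` at every vertex `x`. -/
def LGraph (N : Network V) (F G : N.L2X) : Prop :=
  ∃ f g h : V → V → ℝ → ℂ, N.IsH2Rep f g h ∧
    (⇑(F : Lp ℂ 2 N.edgeMeasure) =ᵐ[N.edgeMeasure] fun p => f p.1.1 p.1.2 p.2) ∧
    (∀ x u v, N.adj x u → N.adj x v → f x u 0 = f x v 0) ∧
    (∀ x, Summable fun y => (N.c x y : ℂ) * g x y 0) ∧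
    (∀ x, ∑' y, (N.c x y : ℂ) * g x y 0 = 0) ∧
    (⇑(G : Lp ℂ 2 N.edgeMeasure) =ᵐ[N.edgeMeasure] fun p => -(h p.1.1 p.1.2 p.2))

end Network

/-- The graph of the adjoint of a densely defined operator, described by its graph `T`:
`(G,K) ∈ graph T*` iff `⟪G, SF⟫ = ⟪K, F⟫` for all `(F, SF) ∈ T`. -/
def adjointGraph {H : Type*} [NormedAddCommGroup H] [InnerProductSpace ℂ H]
    (T : Set (H × H)) : Set (H × H) :=
  {q | ∀ p ∈ T, (inner ℂ q.1 p.2 : ℂ) = inner ℂ q.2 p.1}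

/-- A densely defined operator given by its graph `T` is self-adjoint if `T* = T`. -/
def IsSelfAdjointGraph {H : Type*} [NormedAddCommGroup H] [InnerProductSpace ℂ H]
    (T : Set (H × H)) : Prop :=
  Dense (Prod.fst '' T) ∧ adjointGraph T = T

/-- The entire function `Φ(z,t) = t` for `z = 0` and `sin(zt)/z` otherwise. -/
def Phi (z : ℂ) (t : ℝ) : ℂ := if z = 0 then (t : ℂ) else Complex.sin (z * t) / z

namespace Network

variable {V : Type} [Countable V] [MeasurableSpace V] [DiscreteMeasurableSpace V]

/-- Iterated forward extension step for the d'Alembert extension: `fwdExt f n x y s`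
represents `F̃(xy, s + n)` for `s ∈ (0,1]`. -/
def fwdExt (N : Network V) (f : V → V → ℝ → ℂ) : ℕ → V → V → ℝ → ℂ
  | 0 => f
  | (n+1) => fun x y s =>
      (2 / (N.m0 y) : ℂ) * ∑' v, (N.c y v : ℂ) * N.fwdExt f n y v s - N.fwdExt f n y x s

/-- Iterated backward extension step for the d'Alembert extension: `bwdExt f n x y s`
represents `F̃(xy, s - n)` for `s ∈ [0,1)`. -/
def bwdExt (N : Network V) (f : V → V → ℝ → ℂ) : ℕ → V → V → ℝ → ℂ
  | 0 => f
  | (n+1) => fun x y s =>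
      (2 / (N.m0 x) : ℂ) * ∑' u, (N.c x u : ℂ) * N.bwdExt f n u x s - N.bwdExt f n y x s

/-- The d'Alembert extension `F̃` of a function `F` on the metric graph: each edge component
`t ↦ F(xy,t)`, `t ∈ [0,1]`, is extended to the whole real line by the recursion
`F̃(xy,t) = (2/m⁰(y)) ∑_{v∼y} c(yv) F̃(yv,t-1) - F̃(yx,t-1)` for `t > 1` and
`F̃(xy,t) = (2/m⁰(x)) ∑_{u∼x} c(ux) F̃(ux,t+1) - F̃(yx,t+1)` for `t < 0`. -/
def tilde (N : Network V) (f : V → V → ℝ → ℂ) (x y : V) (t : ℝ) : ℂ :=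
  if 0 ≤ t ∧ t ≤ 1 then f x y t
  else if 1 < t then N.fwdExt f (⌈t⌉ - 1).toNat x y (t - ((⌈t⌉ - 1 : ℤ) : ℝ))
  else N.bwdExt f (-⌊t⌋).toNat x y (t + ((-⌊t⌋ : ℤ) : ℝ))

/-- The d'Alembert operator `C(τ)` at the level of functions. -/
def dAlembertFun (N : Network V) (f : V → V → ℝ → ℂ) (τ : ℝ) (x y : V) (t : ℝ) : ℂ :=
  (N.tilde f x y (t + τ) + N.tilde f x y (t - τ)) / 2

/-- The squared norm `‖g‖²_{L²(X¹,m¹)} = (1/2) ∑_x ∑_{y} c(xy) ∫₀¹ |g(xy,t)|² dt`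
(with values in `ℝ≥0∞`). -/
def normSq (N : Network V) (g : V → V → ℝ → ℂ) : ℝ≥0∞ :=
  (1/2 : ℝ≥0∞) * ∑' x, ∑' y, ENNReal.ofReal (N.c x y) *
    ∫⁻ t in Set.Ioo (0:ℝ) 1, ((‖g x y t‖₊ : ℝ≥0∞) ^ 2)

end Network

namespace Network

/-- The Krein γ-field: `(γ(z)h)(xy,t) = h(x)·Φ(√z,1-t)/Φ(√z,1) + h(y)·Φ(√z,t)/Φ(√z,1)`. -/
def gammaField {V : Type} (_N : Network V) (z : ℂ) (h : V → ℂ) (x y : V) (t : ℝ) : ℂ :=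
  h x * Phi (z ^ ((1:ℂ)/2)) (1 - t) / Phi (z ^ ((1:ℂ)/2)) 1
    + h y * Phi (z ^ ((1:ℂ)/2)) t / Phi (z ^ ((1:ℂ)/2)) 1

end Network

/-!
On every edge, `γ(z)h` is a combination of `Φ(w,1-t)` and `Φ(w,t)` with `w² = z`; since
`∂ₜΦ(w,t) = cos(wt)` and `∂ₜcos(wt) = -w²Φ(w,t)`, it solves `-F'' = zF` edgewise. The endpoint
values follow from `Φ(w,0) = 0` and `Φ(w,1) = sin w / w ≠ 0`, which is exactly `z ∉ Σ`.
Square-integrability of `F` and `F'` reduces to `h ∈ ℓ²(X⁰,m⁰)`: on an edge they are bounded by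
`C (|h(x)| + |h(y)|)`, the integral of `|h(x)|²` against `m¹` is `½ ∑ₓ m⁰(x)|h(x)|²`, and the
`h(y)` term is the `h(x)` term transported by the orientation flip `(xy,t) ↦ (yx,1-t)`.
-/

theorem Phi_zero_right (w : ℂ) : Phi w 0 = 0 := by
  by_cases hw : w = 0 <;> simp [Phi, hw]

theorem Phi_one_ne_zero {w : ℂ} (hw : ∀ n : ℕ, 1 ≤ n → w ^ 2 ≠ ((Real.pi * n : ℝ) : ℂ) ^ 2) :
    Phi w 1 ≠ 0 := by
  by_cases hw0 : w = 0
  · simp [Phi, hw0]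
  rw [Phi, if_neg hw0, Complex.ofReal_one, mul_one, div_ne_zero_iff]
  refine ⟨fun hsin => ?_, hw0⟩
  obtain ⟨k, rfl⟩ := Complex.sin_eq_zero_iff.mp hsin
  have hk : k ≠ 0 := by rintro rfl; simp at hw0
  refine hw k.natAbs (Int.natAbs_pos.mpr hk) ?_
  have hsq : ((k.natAbs : ℝ) : ℂ) ^ 2 = (k : ℂ) ^ 2 := by
    rw [Complex.ofReal_natCast, ← Int.cast_natCast, ← Int.cast_pow, Int.natAbs_sq, Int.cast_pow]
  push_cast
  rw [mul_pow, mul_pow, ← Complex.ofReal_natCast, hsq]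
  ring

theorem hasDerivAt_Phi (w : ℂ) (t : ℝ) :
    HasDerivAt (fun s : ℝ => Phi w s) (Complex.cos (w * t)) t := by
  by_cases hw : w = 0
  · simpa [Phi, hw] using (hasDerivAt_id t).ofReal_comp
  · simp only [Phi, if_neg hw]
    have hsin : HasDerivAt (fun s : ℂ => Complex.sin (w * s)) (Complex.cos (w * t) * w) t := by
      simpa using ((hasDerivAt_id (t : ℂ)).const_mul w).csin
    simpa [mul_div_assoc, div_self hw] using hsin.comp_ofReal.div_const w

theorem hasDerivAt_cos_mul_ofReal (w : ℂ) (t : ℝ) :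
    HasDerivAt (fun s : ℝ => Complex.cos (w * s)) (-(w ^ 2 * Phi w t)) t := by
  have hcos : HasDerivAt (fun s : ℂ => Complex.cos (w * s)) (-Complex.sin (w * t) * w) t := by
    simpa using ((hasDerivAt_id (t : ℂ)).const_mul w).ccos
  convert hcos.comp_ofReal using 1
  by_cases hw : w = 0
  · simp [hw]
  · simp only [Phi, if_neg hw]
    field_simp

@[fun_prop]
theorem continuous_Phi (w : ℂ) : Continuous fun t : ℝ => Phi w t :=
  continuous_iff_continuousAt.mpr fun t => (hasDerivAt_Phi w t).continuousAt

namespace Network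

variable {V : Type} (N : Network V)

theorem c_nonneg (x y : V) : 0 ≤ N.c x y := by
  by_cases hxy : N.adj x y
  · exact (N.c_pos x y hxy).le
  · exact (N.c_eq_zero x y hxy).ge

theorem ofReal_m0 (x : V) : ENNReal.ofReal (N.m0 x) = ∑' y, ENNReal.ofReal (N.c x y) :=
  ENNReal.ofReal_tsum_of_nonneg (N.c_nonneg x) (N.c_summable x)

theorem m0_nonneg (x : V) : 0 ≤ N.m0 x := tsum_nonneg (N.c_nonneg x)

theorem ae_mem_Ioo_edgeMeasure [MeasurableSpace V] :
    ∀ᵐ p ∂N.edgeMeasure, p.2 ∈ Ioo (0 : ℝ) 1 := by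
  have hmeas : MeasurableSet {p : (V × V) × ℝ | p.2 ∈ Ioo (0 : ℝ) 1} :=
    measurable_snd measurableSet_Ioo
  refine (Measure.ae_sum_iff' hmeas).mpr fun e => ?_
  rw [ae_map_iff measurable_prodMk_left.aemeasurable hmeas]
  exact Measure.ae_smul_measure (ae_restrict_mem measurableSet_Ioo) _

section Discrete

variable [MeasurableSpace V] [DiscreteMeasurableSpace V]

theorem lintegral_edgeMeasure_comp_fst_fst (F : V → ℝ≥0∞) :
    ∫⁻ p, F p.1.1 ∂N.edgeMeasure = (∑' x, ENNReal.ofReal (N.m0 x) * F x) / 2 := by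
  have hF : Measurable fun p : (V × V) × ℝ => F p.1.1 :=
    Measurable.of_discrete.comp (measurable_fst.comp measurable_fst)
  simp_rw [edgeMeasure, lintegral_sum_measure, lintegral_map hF measurable_prodMk_left,
    lintegral_smul_measure, setLIntegral_const, Real.volume_Ioo]
  simp only [sub_zero, ENNReal.ofReal_one, mul_one, smul_eq_mul, ENNReal.tsum_prod']
  rw [div_eq_mul_inv, ← ENNReal.tsum_mul_right]
  refine tsum_congr fun x => ?_
  rw [N.ofReal_m0, ← ENNReal.tsum_mul_right, ← ENNReal.tsum_mul_right]
  refine tsum_congr fun y => ?_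
  rw [ENNReal.ofReal_div_of_pos two_pos, ENNReal.ofReal_ofNat, div_eq_mul_inv]
  ring

theorem memLp_comp_fst_fst {h : V → ℂ} (hh : Summable fun x => N.m0 x * ‖h x‖ ^ 2) :
    MemLp (fun p : (V × V) × ℝ => h p.1.1) 2 N.edgeMeasure := by
  refine ⟨(Measurable.of_discrete.comp (measurable_fst.comp measurable_fst)).aestronglyMeasurable,
    ?_⟩
  rw [eLpNorm_lt_top_iff_lintegral_rpow_enorm_lt_top two_ne_zero ENNReal.ofNat_ne_top,
    N.lintegral_edgeMeasure_comp_fst_fst fun x => ‖h x‖ₑ ^ (2 : ℝ≥0∞).toReal]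
  refine ENNReal.div_lt_top (ne_of_lt ?_) two_ne_zero
  have hterm (x : V) : ENNReal.ofReal (N.m0 x) * ‖h x‖ₑ ^ (2 : ℝ≥0∞).toReal
      = ENNReal.ofReal (N.m0 x * ‖h x‖ ^ 2) := by
    rw [ENNReal.toReal_ofNat, ENNReal.rpow_two, ← ofReal_norm,
      ← ENNReal.ofReal_pow (norm_nonneg _), ← ENNReal.ofReal_mul (N.m0_nonneg x)]
  simp_rw [hterm]
  rw [← ENNReal.ofReal_tsum_of_nonneg (fun x => mul_nonneg (N.m0_nonneg x) (sq_nonneg _)) hh]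
  exact ENNReal.ofReal_lt_top

theorem memLp_comp_fst_fst_mul {h : V → ℂ} (hh : Summable fun x => N.m0 x * ‖h x‖ ^ 2)
    {u : ℝ → ℂ} (hu : Continuous u) :
    MemLp (fun p : (V × V) × ℝ => h p.1.1 * u p.2) 2 N.edgeMeasure := by
  obtain ⟨M, hM⟩ :=
    (isCompact_Icc (a := (0 : ℝ)) (b := 1)).exists_bound_of_continuousOn hu.continuousOn
  refine ((N.memLp_comp_fst_fst hh).const_mul M).of_le ?_ ?_
  · exact ((Measurable.of_discrete.comp (measurable_fst.comp measurable_fst)).mul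
      (hu.measurable.comp measurable_snd)).aestronglyMeasurable
  filter_upwards [N.ae_mem_Ioo_edgeMeasure] with p hp
  rw [norm_mul, norm_mul, mul_comm]
  gcongr
  exact (hM _ (Ioo_subset_Icc_self hp)).trans (by simp [le_abs_self])

theorem memLp_comp_snd_mul [Countable V] {h : V → ℂ}
    (hh : Summable fun x => N.m0 x * ‖h x‖ ^ 2) {u : ℝ → ℂ} (hu : Continuous u) :
    MemLp (fun p : (V × V) × ℝ => h p.1.2 * u p.2) 2 N.edgeMeasure := by
  have hflip := (N.memLp_comp_fst_fst_mul hh (u := fun t => u (1 - t)) (by fun_prop))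
    |>.comp_measurePreserving N.measurePreserving_eFlip
  simpa [Function.comp_def, eFlip] using hflip

theorem memLp_edge_combination [Countable V] {h : V → ℂ}
    (hh : Summable fun x => N.m0 x * ‖h x‖ ^ 2) {u v : ℝ → ℂ} (hu : Continuous u)
    (hv : Continuous v) :
    MemLp (fun p : (V × V) × ℝ => h p.1.1 * u p.2 + h p.1.2 * v p.2) 2 N.edgeMeasure :=
  (N.memLp_comp_fst_fst_mul hh hu).add (N.memLp_comp_snd_mul hh hv)

end Discrete

end Network

/-- Let `z ∉ Σ = {(πn)² : n ∈ ℕ}` and `h ∈ ℓ²(X⁰,m⁰)`.  Define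
`F(xy,t) = h(x)·Φ(√z,1-t)/Φ(√z,1) + h(y)·Φ(√z,t)/Φ(√z,1)`.  Then `F ∈ Ĥ²(X¹,m¹)`
(`F` is square integrable, edgewise smooth with square-integrable derivatives), `F` is
compatible with the identifications `(xy,t) ≡ (yx,1-t)` and continuous at the vertices
(so `F ∈ dom S`), on every edge `-F''_{xy} = z F_{xy}` (i.e. `SF = zF`), and `ΓF = h`;
in other words, `F = γ(z)h` for the Krein γ-field `γ` of the boundary triple
`(ℓ²(X⁰,m⁰), Γ, Γ')`. -/
theorem gammaField_in_ker_S_sub_z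
    {V : Type} [Countable V] [MeasurableSpace V] [DiscreteMeasurableSpace V]
    (N : Network V) (z : ℂ) (hz : ∀ n : ℕ, 1 ≤ n → z ≠ (((Real.pi * n : ℝ) : ℂ))^2)
    (h : V → ℂ) (hh : Summable fun x => N.m0 x * ‖h x‖^2) :
    MemLp (fun p : (V × V) × ℝ => N.gammaField z h p.1.1 p.1.2 p.2) 2 N.edgeMeasure ∧
    (∀ x y : V, ∀ t : ℝ, N.gammaField z h x y t = N.gammaField z h y x (1 - t)) ∧
    (∃ g : V → V → ℝ → ℂ,
      (∀ x y, N.adj x y → ∀ t : ℝ,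
        HasDerivAt (fun s => N.gammaField z h x y s) (g x y t) t ∧
        HasDerivAt (fun s => g x y s) (-(z * N.gammaField z h x y t)) t) ∧
      MemLp (fun p : (V × V) × ℝ => g p.1.1 p.1.2 p.2) 2 N.edgeMeasure) ∧
    (∀ x u v, N.adj x u → N.adj x v →
      N.gammaField z h x u 0 = N.gammaField z h x v 0) ∧
    (∀ x y, N.adj x y → N.gammaField z h x y 0 = h x) := by
  have hw : (z ^ ((1 : ℂ) / 2)) ^ 2 = z := by rw [one_div]; exact Complex.cpow_ofNat_inv_pow z 2
  generalize hwz : z ^ ((1 : ℂ) / 2) = w at hw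
  have hD : Phi w 1 ≠ 0 := Phi_one_ne_zero (hw ▸ hz)
  have hF (x y : V) (t : ℝ) : N.gammaField z h x y t
      = h x * (Phi w (1 - t) / Phi w 1) + h y * (Phi w t / Phi w 1) := by
    simp only [Network.gammaField, hwz, mul_div_assoc]
  let g : V → V → ℝ → ℂ := fun x y t =>
    h x * (-Complex.cos (w * ↑(1 - t)) / Phi w 1) + h y * (Complex.cos (w * t) / Phi w 1)
  have hΓ (x y : V) : N.gammaField z h x y 0 = h x := by simp [hF, Phi_zero_right, hD]
  refine ⟨?_, fun x y t => ?_, ⟨g, fun x y _ t => ⟨?_, ?_⟩, ?_⟩,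
    fun x u v _ _ => by rw [hΓ, hΓ], fun x y _ => hΓ x y⟩
  · simp_rw [hF]
    exact N.memLp_edge_combination hh (u := fun t => Phi w (1 - t) / Phi w 1)
      (v := fun t => Phi w t / Phi w 1) (by fun_prop) (by fun_prop)
  · rw [hF, hF, _root_.sub_sub_cancel]
    ring
  · simp_rw [hF]
    exact ((((hasDerivAt_Phi w (1 - t)).comp_const_sub 1 t).div_const _).const_mul (h x)).add
      (((hasDerivAt_Phi w t).div_const _).const_mul (h y))
  · have hcos := hasDerivAt_cos_mul_ofReal w
    refine ((((hcos (1 - t)).comp_const_sub 1 t).neg.div_const _).const_mul (h x) |>.add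
      (((hcos t).div_const _).const_mul (h y))).congr_deriv ?_
    rw [hF, ← hw]
    ring
  · exact N.memLp_edge_combination hh (u := fun t => -Complex.cos (w * ↑(1 - t)) / Phi w 1)
      (v := fun t => Complex.cos (w * t) / Phi w 1) (by fun_prop) (by fun_prop)
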